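/- Let R be a commutative ring that is a finitely generated ℂ-algebra, let m be a maximal ideal of R, and let M be a finitely generated R-module with nonzero localization M_m. Then the m-adic completion of M is finite-dimensional as a ℂ-vector space if and only if the localized module M_m has finite length over the local ring R_m. -/

import Mathlib

/-!
Both sides are equivalent to the stabilization `m ^ (k + 1) M = m ^ k M` of the `m`-adic filtration
for some `k`. If the filtration stabilizes at `k`, evaluation at level `k` identifies the completion
with `M ⧸ m ^ k M`, a finite module over the Artinian ring `R ⧸ m ^ k`, which is finite over `ℂ` by
the Nullstellensatz. Conversely, a finite-dimensional completion is Artinian over `R`, so the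
kernels of the evaluations stabilize, and these pull back to the `m ^ n M`. On the local side,
stabilization may be checked after localizing at `m`, since at any other maximal ideal both sides
localize to everything; over the Noetherian local ring `R_m`, Nakayama turns it into `M_m` being
killed by a power of the maximal ideal, that is, into finite length.
-/

open Submodule

section Stabilization
variable {R : Type*} [CommRing R] {I : Ideal R} {M : Type*} [AddCommGroup M] [Module R M]

theorem pow_smul_top_eq_of_pow_succ_smul_top_eq {k n : ℕ}
    (h : I ^ (k + 1) • (⊤ : Submodule R M) = I ^ k • ⊤) (hkn : k ≤ n) :
    I ^ n • (⊤ : Submodule R M) = I ^ k • ⊤ := by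
  induction n, hkn using Nat.le_induction with
  | base => rfl
  | succ n _ ih => rw [pow_succ', mul_smul, ih, ← mul_smul, ← pow_succ', h]

namespace AdicCompletion

theorem eval_injective_of_pow_succ_smul_top_eq {k : ℕ}
    (h : I ^ (k + 1) • (⊤ : Submodule R M) = I ^ k • ⊤) : Function.Injective (eval I M k) := by
  refine (injective_iff_map_eq_zero _).mpr fun x hx => ext fun n => ?_
  rcases le_total n k with hnk | hkn
  · rw [val_zero_apply, ← transitionMap_comp_eval_apply I M hnk, ← eval_apply, hx,
      LinearMap.map_zero]
  · obtain ⟨y, hy⟩ := Submodule.Quotient.mk_surjective _ (x.val n)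
    have hyk : (Submodule.Quotient.mk y : M ⧸ I ^ k • (⊤ : Submodule R M)) = 0 := by
      rw [← hx, eval_apply, ← transitionMap_comp_eval_apply I M hkn, ← hy]
      rfl
    rw [← hy, val_zero_apply, Quotient.mk_eq_zero, pow_smul_top_eq_of_pow_succ_smul_top_eq h hkn]
    exact (Quotient.mk_eq_zero _).mp hyk

theorem isTorsionBySet_pow_of_pow_succ_smul_top_eq {k : ℕ}
    (h : I ^ (k + 1) • (⊤ : Submodule R M) = I ^ k • ⊤) :
    Module.IsTorsionBySet R (AdicCompletion I M) ↑(I ^ k) := fun x a =>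
  eval_injective_of_pow_succ_smul_top_eq h <| by
    rw [LinearMap.map_smul, LinearMap.map_zero]
    exact Module.isTorsionBySet_quotient_ideal_smul M (I ^ k) (x := eval I M k x) (a := a)

noncomputable def evalEquivOfPowSuccSmulTopEq {k : ℕ}
    (h : I ^ (k + 1) • (⊤ : Submodule R M) = I ^ k • ⊤) :
    AdicCompletion I M ≃ₗ[R] M ⧸ I ^ k • (⊤ : Submodule R M) :=
  .ofBijective (eval I M k) ⟨eval_injective_of_pow_succ_smul_top_eq h, eval_surjective I M k⟩

theorem comap_of_ker_eval (n : ℕ) :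
    (LinearMap.ker (eval I M n)).comap (of I M) = I ^ n • ⊤ := by
  rw [← LinearMap.ker_comp, eval_comp_of, ker_mkQ]

theorem exists_pow_succ_smul_top_eq_of_isArtinian [IsArtinian R (AdicCompletion I M)] :
    ∃ k, I ^ (k + 1) • (⊤ : Submodule R M) = I ^ k • ⊤ := by
  obtain ⟨k, hk⟩ := IsArtinian.monotone_stabilizes (R := R) (M := AdicCompletion I M)
    ⟨fun n => OrderDual.toDual (LinearMap.ker (eval I M n)), fun a b hab => by
      change LinearMap.ker (eval I M b) ≤ LinearMap.ker (eval I M a)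
      rw [← transitionMap_comp_eval I M hab]
      exact LinearMap.ker_le_ker_comp _ _⟩
  refine ⟨k, ?_⟩
  have hker : LinearMap.ker (eval I M (k + 1)) = LinearMap.ker (eval I M k) :=
    (hk (k + 1) k.le_succ).symm
  rw [← comap_of_ker_eval, hker, comap_of_ker_eval]

end AdicCompletion

end Stabilization

section TorsionByPow
variable {R : Type*} [CommRing R] [IsNoetherianRing R] (m : Ideal R) [m.IsMaximal]

instance Ideal.Quotient.isArtinianRing_pow_of_isMaximal (k : ℕ) :
    IsArtinianRing (R ⧸ m ^ k) := by
  rw [isArtinianRing_iff_krullDimLE_zero, Ring.krullDimLE_zero_iff]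
  intro J hJ
  have hm : J.comap (Ideal.Quotient.mk ↑(m ^ k)) = m := by
    refine (Ideal.IsMaximal.eq_of_le ‹_› (Ideal.IsPrime.comap _).ne_top ?_).symm
    refine (hJ.comap _).le_of_pow_le (n := k) ?_
    simpa only [Ideal.mk_ker] using Ideal.ker_le_comap (Ideal.Quotient.mk ↑(m ^ k)) (K := J)
  refine Ideal.isMaximal_of_isIntegral_of_isMaximal_comap (R := R) J ?_
  change (J.comap (Ideal.Quotient.mk _)).IsMaximal
  rwa [hm]

variable {X : Type*} [AddCommGroup X] [Module R X] [Module.Finite R X]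

theorem isArtinian_of_isTorsionBySet_pow {k : ℕ} (h : Module.IsTorsionBySet R X ↑(m ^ k)) :
    IsArtinian R X := by
  let := h.module
  have := h.isScalarTower (S := R)
  have := Module.Finite.of_restrictScalars_finite R (R ⧸ m ^ k) X
  exact isArtinian_of_surjective_algebraMap (S := R) (R := R ⧸ m ^ k) Ideal.Quotient.mk_surjective

theorem Module.finite_of_isTorsionBySet_pow (K : Type*) [CommRing K] [IsJacobsonRing K]
    [Algebra K R] [Algebra.FiniteType K R] [Module K X] [IsScalarTower K R X] {k : ℕ}
    (h : Module.IsTorsionBySet R X ↑(m ^ k)) : Module.Finite K X := by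
  let := h.module
  have := h.isScalarTower (S := R)
  have := h.isScalarTower (S := K)
  have := Module.Finite.of_restrictScalars_finite R (R ⧸ m ^ k) X
  have := Module.finite_of_isArtinianRing K (R ⧸ m ^ k)
  exact .trans (R ⧸ m ^ k) X

end TorsionByPow

theorem IsLocalRing.isFiniteLength_iff_exists_pow_succ_smul_top_eq {A N : Type*} [CommRing A]
    [IsLocalRing A] [IsNoetherianRing A] [AddCommGroup N] [Module A N] [Module.Finite A N] :
    IsFiniteLength A N ↔
      ∃ k, maximalIdeal A ^ (k + 1) • (⊤ : Submodule A N) = maximalIdeal A ^ k • ⊤ := by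
  rw [isFiniteLength_iff_isNoetherian_isArtinian, and_iff_right (inferInstance : IsNoetherian A N)]
  constructor
  · intro _
    obtain ⟨k, hk⟩ := IsArtinian.monotone_stabilizes (R := A) (M := N)
      ⟨fun n => OrderDual.toDual (maximalIdeal A ^ n • ⊤),
        fun a b hab => smul_mono_left (Ideal.pow_le_pow_right hab)⟩
    exact ⟨k, (hk (k + 1) k.le_succ).symm⟩
  · rintro ⟨k, hk⟩
    have hbot : maximalIdeal A ^ k • (⊤ : Submodule A N) = ⊥ := by
      refine eq_bot_of_le_smul_of_le_jacobson_bot (maximalIdeal A) _ (IsNoetherian.noetherian _)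
        ?_ (maximalIdeal_le_jacobson ⊥)
      rw [← mul_smul, ← pow_succ', hk]
    refine isArtinian_of_isTorsionBySet_pow (maximalIdeal A) (k := k) fun x a => ?_
    exact (Submodule.eq_bot_iff _).mp hbot _ (smul_mem_smul a.2 mem_top)

section Localization
variable {R : Type*} [CommRing R] {M : Type*} [AddCommGroup M] [Module R M]

theorem Submodule.localized₀_ideal_smul_top_eq_top {S : Submonoid R} {I : Ideal R} {s : R}
    (hsI : s ∈ I) (hsS : s ∈ S) {Mₛ : Type*} [AddCommGroup Mₛ] [Module R Mₛ]
    (f : M →ₗ[R] Mₛ) [IsLocalizedModule S f] :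
    (I • ⊤ : Submodule R M).localized₀ S f = ⊤ := by
  rw [eq_top_iff]
  rintro y -
  obtain ⟨⟨x, t⟩, rfl⟩ := IsLocalizedModule.mk'_surjective S f y
  exact ⟨s • x, smul_mem_smul hsI mem_top, ⟨s, hsS⟩ * t,
    IsLocalizedModule.mk'_cancel_left f (s₁ := ⟨s, hsS⟩) x t⟩

theorem localized'_pow_smul_top (m : Ideal R) [m.IsPrime] (k : ℕ) :
    (m ^ k • ⊤ : Submodule R M).localized' (Localization.AtPrime m) m.primeCompl
        (LocalizedModule.mkLinearMap m.primeCompl M) =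
      IsLocalRing.maximalIdeal (Localization.AtPrime m) ^ k • ⊤ := by
  rw [localized'_smul, Ideal.localized'_eq_map, localized'_top, Ideal.map_pow,
    Localization.AtPrime.map_eq_maximalIdeal]

theorem pow_succ_smul_top_eq_iff_localization (m : Ideal R) [m.IsMaximal] (k : ℕ) :
    m ^ (k + 1) • (⊤ : Submodule R M) = m ^ k • ⊤ ↔
      IsLocalRing.maximalIdeal (Localization.AtPrime m) ^ (k + 1) •
          (⊤ : Submodule (Localization.AtPrime m) (LocalizedModule m.primeCompl M)) =
        IsLocalRing.maximalIdeal (Localization.AtPrime m) ^ k • ⊤ := by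
  rw [← localized'_pow_smul_top, ← localized'_pow_smul_top]
  refine ⟨fun h => h ▸ rfl, fun h => ?_⟩
  refine eq_of_localization₀_maximal (fun P _ => LocalizedModule P.primeCompl M)
    (fun P _ => LocalizedModule.mkLinearMap P.primeCompl M) fun P _ => ?_
  by_cases hmP : m ≤ P
  · obtain rfl := (‹m.IsMaximal›.eq_of_le (Ideal.IsMaximal.ne_top ‹_›) hmP)
    exact congrArg (restrictScalars R) h
  · obtain ⟨s, hsm, hsP⟩ := SetLike.not_le_iff_exists.mp hmP
    have hsP' : s ∈ P.primeCompl := hsP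
    rw [localized₀_ideal_smul_top_eq_top (Ideal.pow_mem_pow hsm _) (pow_mem hsP' _),
      localized₀_ideal_smul_top_eq_top (Ideal.pow_mem_pow hsm _) (pow_mem hsP' _)]

end Localization

open AdicCompletion in
theorem adicCompletion_finiteDimensional_iff_isFiniteLength_localization_general
    {R : Type*} [CommRing R] [Algebra ℂ R] [Algebra.FiniteType ℂ R]
    (m : Ideal R) [m.IsMaximal]
    (M : Type*) [AddCommGroup M] [Module R M] [Module.Finite R M] :
    @FiniteDimensional ℂ (RestrictScalars ℂ R (AdicCompletion m M)) _ _
      (RestrictScalars.module ℂ R (AdicCompletion m M)) ↔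
      IsFiniteLength (Localization.AtPrime m) (LocalizedModule m.primeCompl M) := by
  have hR := Algebra.FiniteType.isNoetherianRing ℂ R
  have := IsLocalization.isNoetherianRing m.primeCompl (Localization.AtPrime m) hR
  -- move the `ℂ`-structure of the type synonym `RestrictScalars ℂ R _` onto the completion itself
  let := Module.restrictScalars ℂ R (AdicCompletion m M)
  have := IsScalarTower.restrictScalars ℂ R (AdicCompletion m M)
  change Module.Finite ℂ (AdicCompletion m M) ↔ _
  simp_rw [IsLocalRing.isFiniteLength_iff_exists_pow_succ_smul_top_eq,
    ← pow_succ_smul_top_eq_iff_localization]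
  refine ⟨fun _ => ?_, fun ⟨k, hk⟩ => ?_⟩
  · have : IsArtinian R (AdicCompletion m M) := isArtinian_of_tower ℂ inferInstance
    exact exists_pow_succ_smul_top_eq_of_isArtinian
  have := Module.Finite.equiv (evalEquivOfPowSuccSmulTopEq hk).symm
  exact Module.finite_of_isTorsionBySet_pow m ℂ (isTorsionBySet_pow_of_pow_succ_smul_top_eq hk)

/-- Let `R` be a commutative finitely generated `ℂ`-algebra, `m` a maximal
ideal of `R`, and `M` a finitely generated `R`-module whose localization `M_m` is nonzero.
Then the `m`-adic completion of `M` is finite-dimensional as a `ℂ`-vector space if and only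
if the localized module `M_m` has finite length over the local ring `R_m`. -/
theorem adicCompletion_finiteDimensional_iff_isFiniteLength_localization
    {R : Type*} [CommRing R] [Algebra ℂ R] [Algebra.FiniteType ℂ R]
    (m : Ideal R) [m.IsMaximal]
    (M : Type*) [AddCommGroup M] [Module R M] [Module.Finite R M]
    (hM : Nontrivial (LocalizedModule m.primeCompl M)) :
    @FiniteDimensional ℂ (RestrictScalars ℂ R (AdicCompletion m M)) _ _
      (RestrictScalars.module ℂ R (AdicCompletion m M)) ↔
      IsFiniteLength (Localization.AtPrime m) (LocalizedModule m.primeCompl M) :=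
  adicCompletion_finiteDimensional_iff_isFiniteLength_localization_general m M
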